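/- Suppose condition (I⁰_ρ) holds for some ρ > 0: there exists a finite positive Borel measure dA^ρ on [0,1], with α^ρ[u] := ∫₀¹ u(t) dA^ρ(t) and 𝒦^ρ(s) := ∫₀¹ k(t,s) dA^ρ(t), such that α^ρ[γ] < 1, H[u] ≥ α^ρ[u] for every u ∈ K with min_{t∈[a,b]} u(t) = ρ, and f_{ρ,ρ/c} · inf_{t∈[a,b]} { γ(t)/(1−α^ρ[γ]) · ∫_a^b 𝒦^ρ(s) g(s) ds + ∫_a^b k(t,s) g(s) ds } > 1, where f_{ρ,ρ/c} := ess inf { f(t,u)/ρ : t ∈ [a,b], ρ ≤ u ≤ ρ/c }. Then for every u ∈ K with min_{t∈[a,b]} u(t) = ρ and every real λ ≥ 0 one has u ≠ Tu + λ·𝟙, where 𝟙 denotes the constant function equal to 1 on [0,1]. -/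

import Mathlib

open MeasureTheory Set

/-- Supremum norm of `u` on `[0,1]`. -/
noncomputable def nrm (u : ℝ → ℝ) : ℝ := sSup ((fun t => |u t|) '' Icc (0:ℝ) 1)

/-- Minimum (infimum) of `u` on `[a,b]`. -/
noncomputable def minOnAB (u : ℝ → ℝ) (a b : ℝ) : ℝ := sInf (u '' Icc a b)

/-- The perturbed Hammerstein operator `Tu(t) = γ(t)H[u] + ∫₀¹ k(t,s)g(s)f(s,u(s)) ds`. -/
noncomputable def Tham (k : ℝ → ℝ → ℝ) (g : ℝ → ℝ) (f : ℝ → ℝ → ℝ) (γ : ℝ → ℝ)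
    (H : (ℝ → ℝ) → ℝ) (u : ℝ → ℝ) (t : ℝ) : ℝ :=
  γ t * H u + ∫ s in (0:ℝ)..1, k t s * g s * f s (u s)

/-- Condition (I⁰_ρ) localized on `[a,b]`. -/
def CondI0B (k : ℝ → ℝ → ℝ) (g : ℝ → ℝ) (f : ℝ → ℝ → ℝ) (γ : ℝ → ℝ)
    (H : (ℝ → ℝ) → ℝ) (K : Set (ℝ → ℝ)) (a b c ρ : ℝ) : Prop :=
  ∃ μA : Measure ℝ, IsFiniteMeasure μA ∧ μA ((Icc (0:ℝ) 1)ᶜ) = 0 ∧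
    (∫ t, γ t ∂μA) < 1 ∧
    (∀ u ∈ K, minOnAB u a b = ρ → (∫ t, u t ∂μA) ≤ H u) ∧
    ∃ fb : ℝ,
      (∀ᵐ t ∂(volume.restrict (Icc a b)), ∀ u : ℝ, ρ ≤ u → u ≤ ρ / c → fb * ρ ≤ f t u) ∧
      1 < fb * sInf ((fun t => γ t / (1 - ∫ t', γ t' ∂μA) *
          (∫ s in a..b, (∫ t', k t' s ∂μA) * g s) +
          ∫ s in a..b, k t s * g s) '' Icc a b)

/-!
Suppose `u = Tu + λ` with `min_{[a,b]} u = ρ`. On `[a,b]` we have `ρ ≤ u ≤ ρ/c`, hence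
`f(s,u(s)) ≥ f_{ρ,ρ/c} ρ` there; dropping `λ ≥ 0` and the part of the Hammerstein integral outside
`[a,b]` gives `u(t) ≥ γ(t) H[u] + f_{ρ,ρ/c} ρ ∫_a^b k(t,s) g(s) ds` on `[0,1]`. Integrating this
against `dA^ρ` (Fubini) and using `H[u] ≥ α^ρ[u]` yields
`(1 - α^ρ[γ]) H[u] ≥ f_{ρ,ρ/c} ρ ∫_a^b 𝒦^ρ(s) g(s) ds`. Substituting this bound for `H[u]`
back gives `u(t) ≥ ρ f_{ρ,ρ/c} inf_{[a,b]} {…} > ρ` for every `t ∈ [a,b]`, contradicting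
`min_{[a,b]} u = ρ`.
-/

section Measure

variable {α : Type*} [MeasurableSpace α] {μ : Measure α}

theorem AEMeasurable.caratheodory_comp {f : α → ℝ → ℝ} (hf_meas : ∀ x, Measurable fun t => f t x)
    (hf_cont : ∀ᵐ t ∂μ, ContinuousOn (f t) (Ici 0)) {u : α → ℝ} (hu : AEMeasurable u μ)
    (hu_nonneg : ∀ᵐ t ∂μ, 0 ≤ u t) : AEMeasurable (fun t => f t (u t)) μ := by
  classical
  set N := toMeasurable μ {t | ¬ ContinuousOn (f t) (Ici 0)}
  -- Off the null set `N`, and after precomposing with `|·|`, `f` is continuous in its second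
  -- variable everywhere, hence jointly measurable.
  let F : ℝ → α → ℝ := fun x => N.piecewise 0 fun t => f t |x|
  have hF_cont : ∀ t, Continuous fun x => F x t := by
    intro t
    by_cases ht : t ∈ N
    · simp only [F, piecewise_eq_of_mem _ _ _ ht]
      exact continuous_const
    · have hcont : ContinuousOn (f t) (Ici 0) := by_contra fun h => ht (subset_toMeasurable _ _ h)
      simp only [F, piecewise_eq_of_notMem _ _ _ ht]
      exact hcont.comp_continuous continuous_abs abs_nonneg
  have hF : Measurable (Function.uncurry F) :=
    measurable_uncurry_of_continuous_of_measurable hF_cont fun x =>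
      Measurable.piecewise (measurableSet_toMeasurable _ _) measurable_const (hf_meas |x|)
  have hN : ∀ᵐ t ∂μ, t ∉ N := by
    rw [ae_iff]
    simpa only [not_not, ofPred_mem_eq, N, measure_toMeasurable] using ae_iff.1 hf_cont
  refine (hF.comp_aemeasurable (hu.prodMk aemeasurable_id)).congr ?_
  filter_upwards [hN, hu_nonneg] with t htN ht0
  simp [F, piecewise_eq_of_notMem _ _ _ htN, abs_of_nonneg ht0]

theorem integrable_mul_mul_of_le {κ g Φ w : α → ℝ} {C : ℝ}
    (hκ : AEStronglyMeasurable κ μ) (hκ0 : ∀ᵐ s ∂μ, 0 ≤ κ s) (hκΦ : ∀ᵐ s ∂μ, κ s ≤ Φ s)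
    (hg : AEStronglyMeasurable g μ) (hg0 : ∀ᵐ s ∂μ, 0 ≤ g s)
    (hgΦ : Integrable (fun s => g s * Φ s) μ)
    (hw : AEStronglyMeasurable w μ) (hwC : ∀ᵐ s ∂μ, |w s| ≤ C) :
    Integrable (fun s => κ s * g s * w s) μ := by
  refine (hgΦ.mul_const C).mono' ((hκ.mul hg).mul hw) ?_
  filter_upwards [hκ0, hκΦ, hg0, hwC] with s hκs hΦs hgs hws
  rw [Real.norm_eq_abs, abs_mul, abs_mul, abs_of_nonneg hκs, abs_of_nonneg hgs]
  calc κ s * g s * |w s| ≤ Φ s * g s * |w s| := by gcongr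
  _ ≤ Φ s * g s * C := by gcongr; exact mul_nonneg (hκs.trans hΦs) hgs
  _ = g s * Φ s * C := by ring

theorem mul_setIntegral_le_setIntegral_mul {S T : Set α} (hST : S ⊆ T) {v w : α → ℝ} {m : ℝ}
    (hv : IntegrableOn v S μ) (hvw : IntegrableOn (fun s => v s * w s) T μ)
    (hv0 : ∀ᵐ s ∂μ.restrict S, 0 ≤ v s) (hvw0 : ∀ᵐ s ∂μ.restrict T, 0 ≤ v s * w s)
    (hm : ∀ᵐ s ∂μ.restrict S, m ≤ w s) :
    m * ∫ s in S, v s ∂μ ≤ ∫ s in T, v s * w s ∂μ := by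
  rw [← integral_const_mul]
  calc ∫ s in S, m * v s ∂μ ≤ ∫ s in S, v s * w s ∂μ := by
        refine integral_mono_ae (hv.const_mul m) (hvw.mono_set hST) ?_
        filter_upwards [hv0, hm] with s hvs hms
        nlinarith
  _ ≤ ∫ s in T, v s * w s ∂μ := setIntegral_mono_set hvw hvw0 hST.eventuallyLE

theorem integrable_prod_of_ae_norm_le {β : Type*} [MeasurableSpace β] {ν : Measure β}
    [IsFiniteMeasure μ] [SFinite ν] {F : α × β → ℝ} (hF : AEStronglyMeasurable F (μ.prod ν))
    {D : β → ℝ} (hD : Integrable D ν) (hle : ∀ᵐ x ∂μ, ∀ᵐ y ∂ν, ‖F (x, y)‖ ≤ D y) :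
    Integrable F (μ.prod ν) := by
  rw [integrable_prod_iff hF]
  refine ⟨?_, .of_bound hF.norm.integral_prod_right' (∫ y, D y ∂ν) ?_⟩
  · filter_upwards [hle, hF.prodMk_left] with x hx hFx
    exact hD.mono' hFx hx
  · filter_upwards [hle] with x hx
    exact norm_integral_le_of_norm_le hD (by simpa only [norm_norm] using hx)

end Measure

theorem abs_le_nrm {u : ℝ → ℝ} (hu : ContinuousOn u (Icc (0:ℝ) 1)) {t : ℝ}
    (ht : t ∈ Icc (0:ℝ) 1) : |u t| ≤ nrm u :=
  le_csSup (isCompact_Icc.image_of_continuousOn hu.abs).bddAbove (mem_image_of_mem _ ht)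

theorem minOnAB_le {u : ℝ → ℝ} {a b t : ℝ} (hu : ContinuousOn u (Icc a b)) (ht : t ∈ Icc a b) :
    minOnAB u a b ≤ u t :=
  csInf_le (isCompact_Icc.image_of_continuousOn hu).bddBelow (mem_image_of_mem _ ht)

theorem le_div_of_mul_nrm_le_minOnAB {u : ℝ → ℝ} {a b c ρ t : ℝ}
    (hu : ContinuousOn u (Icc (0:ℝ) 1)) (hc : 0 < c) (hmin : c * nrm u ≤ minOnAB u a b)
    (hρ : minOnAB u a b = ρ) (ht : t ∈ Icc (0:ℝ) 1) : u t ≤ ρ / c := by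
  rw [le_div_iff₀ hc]
  nlinarith [le_abs_self (u t), abs_le_nrm hu ht]

theorem lt_minOnAB_of_one_lt_mul_sInf {u E : ℝ → ℝ} {a b ρ m : ℝ} (hab : a ≤ b) (hρ : 0 < ρ)
    (hE : ∀ t ∈ Icc a b, 0 ≤ E t) (hm : 1 < m * sInf (E '' Icc a b))
    (hu : ∀ t ∈ Icc a b, m * ρ * E t ≤ u t) : ρ < minOnAB u a b := by
  have hne : (Icc a b).Nonempty := nonempty_Icc.2 hab
  have hinf : 0 ≤ sInf (E '' Icc a b) := le_csInf (hne.image E) (forall_mem_image.2 hE)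
  have hm0 : 0 ≤ m * ρ := by nlinarith
  calc ρ < m * ρ * sInf (E '' Icc a b) := by nlinarith
  _ ≤ minOnAB u a b := by
    refine le_csInf (hne.image u) (forall_mem_image.2 fun t ht => (hu t ht).trans' ?_)
    exact mul_le_mul_of_nonneg_left
      (csInf_le ⟨0, forall_mem_image.2 hE⟩ (mem_image_of_mem E ht)) hm0

theorem intervalIntegral_mul_nonneg {v g : ℝ → ℝ} {a b : ℝ} (ha : 0 ≤ a) (hab : a ≤ b)
    (hb : b ≤ 1) (hv : ∀ s ∈ Icc (0:ℝ) 1, 0 ≤ v s)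
    (hg : ∀ᵐ s ∂(volume.restrict (Icc (0:ℝ) 1)), 0 ≤ g s) :
    0 ≤ ∫ s in a..b, v s * g s := by
  refine intervalIntegral.integral_nonneg_of_ae_restrict hab ?_
  filter_upwards [ae_restrict_of_ae_restrict_of_subset (Icc_subset_Icc ha hb) hg,
    ae_restrict_mem measurableSet_Icc] with s hgs hs
  exact mul_nonneg (hv s (Icc_subset_Icc ha hb hs)) hgs

theorem mul_intervalIntegral_le_intervalIntegral_mul_comp {κ g Φ u : ℝ → ℝ} {f : ℝ → ℝ → ℝ}
    {a b r C m : ℝ} (ha : 0 ≤ a) (hab : a ≤ b) (hb : b ≤ 1)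
    (hκ : Measurable κ) (hκ0 : ∀ s ∈ Icc (0:ℝ) 1, 0 ≤ κ s)
    (hκΦ : ∀ᵐ s ∂(volume.restrict (Icc (0:ℝ) 1)), κ s ≤ Φ s)
    (hg : Measurable g) (hg0 : ∀ᵐ s ∂(volume.restrict (Icc (0:ℝ) 1)), 0 ≤ g s)
    (hgΦ : IntegrableOn (fun s => g s * Φ s) (Icc (0:ℝ) 1))
    (hf_meas : ∀ x, Measurable fun t => f t x)
    (hf_cont : ∀ᵐ t ∂(volume.restrict (Icc (0:ℝ) 1)), ContinuousOn (f t) (Ici 0))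
    (hf0 : ∀ t x : ℝ, 0 ≤ x → 0 ≤ f t x)
    (hfC : ∀ᵐ t ∂(volume.restrict (Icc (0:ℝ) 1)), ∀ x ∈ Icc (0:ℝ) r, f t x ≤ C)
    (hu : ContinuousOn u (Icc (0:ℝ) 1)) (hu0 : ∀ s ∈ Icc (0:ℝ) 1, 0 ≤ u s)
    (hur : ∀ s ∈ Icc (0:ℝ) 1, u s ≤ r)
    (hm : ∀ᵐ s ∂(volume.restrict (Icc a b)), m ≤ f s (u s)) :
    m * ∫ s in a..b, κ s * g s ≤ ∫ s in (0:ℝ)..1, κ s * g s * f s (u s) := by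
  have hκ0' : ∀ᵐ s ∂(volume.restrict (Icc (0:ℝ) 1)), 0 ≤ κ s :=
    ae_restrict_of_forall_mem measurableSet_Icc hκ0
  have hfu : AEStronglyMeasurable (fun s => f s (u s)) (volume.restrict (Icc (0:ℝ) 1)) :=
    (AEMeasurable.caratheodory_comp hf_meas hf_cont (hu.aemeasurable measurableSet_Icc)
      (ae_restrict_of_forall_mem measurableSet_Icc hu0)).aestronglyMeasurable
  have hfuC : ∀ᵐ s ∂(volume.restrict (Icc (0:ℝ) 1)), |f s (u s)| ≤ C := by
    filter_upwards [hfC, ae_restrict_mem measurableSet_Icc] with s hs hs01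
    rw [abs_of_nonneg (hf0 _ _ (hu0 s hs01))]
    exact hs _ ⟨hu0 s hs01, hur s hs01⟩
  have hκg : IntegrableOn (fun s => κ s * g s) (Icc (0:ℝ) 1) := by
    simpa only [mul_one, IntegrableOn] using
      integrable_mul_mul_of_le hκ.aestronglyMeasurable hκ0' hκΦ hg.aestronglyMeasurable hg0 hgΦ
        aestronglyMeasurable_const (w := fun _ => (1:ℝ)) (C := 1) (by simp)
  have hκgfu : IntegrableOn (fun s => κ s * g s * f s (u s)) (Icc (0:ℝ) 1) :=
    integrable_mul_mul_of_le hκ.aestronglyMeasurable hκ0' hκΦ hg.aestronglyMeasurable hg0 hgΦ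
      hfu hfuC
  have hsub : Ioc a b ⊆ Icc (0:ℝ) 1 := Ioc_subset_Icc_self.trans (Icc_subset_Icc ha hb)
  rw [intervalIntegral.integral_of_le hab, intervalIntegral.integral_of_le zero_le_one]
  refine mul_setIntegral_le_setIntegral_mul (Ioc_subset_Ioc ha hb) (hκg.mono_set hsub)
    (hκgfu.mono_set Ioc_subset_Icc_self) ?_ ?_ ?_
  · filter_upwards [ae_restrict_of_ae_restrict_of_subset hsub (hg0.and hκ0')] with s hs
    exact mul_nonneg hs.2 hs.1
  · filter_upwards [ae_restrict_of_ae_restrict_of_subset Ioc_subset_Icc_self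
      (hg0.and (hκ0'.and (ae_restrict_of_forall_mem measurableSet_Icc hu0)))] with s hs
    exact mul_nonneg (mul_nonneg hs.2.1 hs.1) (hf0 _ _ hs.2.2)
  · exact ae_restrict_of_ae_restrict_of_subset Ioc_subset_Icc_self hm

theorem integral_intervalIntegral_mul_swap {μ : Measure ℝ} [IsFiniteMeasure μ]
    (hμ : ∀ᵐ t ∂μ, t ∈ Icc (0:ℝ) 1) {k : ℝ → ℝ → ℝ} {g Φ : ℝ → ℝ} {a b : ℝ}
    (ha : 0 ≤ a) (hab : a ≤ b) (hb : b ≤ 1) (hk : Measurable (Function.uncurry k))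
    (hk0 : ∀ t ∈ Icc (0:ℝ) 1, ∀ s ∈ Icc (0:ℝ) 1, 0 ≤ k t s)
    (hkΦ : ∀ t ∈ Icc (0:ℝ) 1, ∀ᵐ s ∂(volume.restrict (Icc (0:ℝ) 1)), k t s ≤ Φ s)
    (hg : Measurable g) (hg0 : ∀ᵐ s ∂(volume.restrict (Icc (0:ℝ) 1)), 0 ≤ g s)
    (hgΦ : IntegrableOn (fun s => g s * Φ s) (Icc (0:ℝ) 1)) :
    Integrable (fun t => ∫ s in a..b, k t s * g s) μ ∧
      ∫ t, (∫ s in a..b, k t s * g s) ∂μ = ∫ s in a..b, (∫ t, k t s ∂μ) * g s := by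
  have hsub : Ioc a b ⊆ Icc (0:ℝ) 1 := Ioc_subset_Icc_self.trans (Icc_subset_Icc ha hb)
  have hint : Integrable (Function.uncurry fun t s => k t s * g s)
      (μ.prod (volume.restrict (Ioc a b))) := by
    refine integrable_prod_of_ae_norm_le (hk.mul (hg.comp measurable_snd)).aestronglyMeasurable
      (hgΦ.mono_set hsub) ?_
    filter_upwards [hμ] with t ht
    filter_upwards [ae_restrict_of_ae_restrict_of_subset hsub ((hkΦ t ht).and hg0),
      ae_restrict_mem measurableSet_Ioc] with s hs hsab
    have hks : 0 ≤ k t s := hk0 t ht s (hsub hsab)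
    rw [Function.uncurry_apply_pair, Real.norm_of_nonneg (mul_nonneg hks hs.2)]
    nlinarith
  simp only [intervalIntegral.integral_of_le hab, ← integral_mul_const]
  exact ⟨hint.integral_prod_left, integral_integral_swap hint⟩

theorem integral_le_one_sub_integral_mul {μ : Measure ℝ} [IsFiniteMeasure μ] {S : Set ℝ}
    (hS : IsCompact S) (hμ : ∀ᵐ t ∂μ, t ∈ S) {u γ B : ℝ → ℝ} {h : ℝ}
    (hu : ContinuousOn u S) (hγ : ContinuousOn γ S) (hB : Integrable B μ)
    (hle : ∀ t ∈ S, γ t * h + B t ≤ u t) (hh : ∫ t, u t ∂μ ≤ h) :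
    ∫ t, B t ∂μ ≤ (1 - ∫ t, γ t ∂μ) * h := by
  have hS_full : μ.restrict S = μ := Measure.restrict_eq_self_of_ae_mem hμ
  have hu_int : Integrable u μ := hS_full ▸ hu.integrableOn_compact hS
  have hγh_int : Integrable (fun t => γ t * h) μ :=
    (hS_full ▸ hγ.integrableOn_compact hS : Integrable γ μ).mul_const h
  have hmono : ∫ t, (γ t * h + B t) ∂μ ≤ ∫ t, u t ∂μ :=
    integral_mono_ae (hγh_int.add hB) hu_int (hμ.mono hle)
  rw [integral_add hγh_int hB, integral_mul_const] at hmono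
  linarith

theorem mul_intervalIntegral_le_one_sub_integral_mul {μ : Measure ℝ} [IsFiniteMeasure μ]
    (hμ : ∀ᵐ t ∂μ, t ∈ Icc (0:ℝ) 1) {k : ℝ → ℝ → ℝ} {g Φ u γ : ℝ → ℝ} {a b h m : ℝ}
    (ha : 0 ≤ a) (hab : a ≤ b) (hb : b ≤ 1) (hk : Measurable (Function.uncurry k))
    (hk0 : ∀ t ∈ Icc (0:ℝ) 1, ∀ s ∈ Icc (0:ℝ) 1, 0 ≤ k t s)
    (hkΦ : ∀ t ∈ Icc (0:ℝ) 1, ∀ᵐ s ∂(volume.restrict (Icc (0:ℝ) 1)), k t s ≤ Φ s)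
    (hg : Measurable g) (hg0 : ∀ᵐ s ∂(volume.restrict (Icc (0:ℝ) 1)), 0 ≤ g s)
    (hgΦ : IntegrableOn (fun s => g s * Φ s) (Icc (0:ℝ) 1))
    (hu : ContinuousOn u (Icc (0:ℝ) 1)) (hγ : ContinuousOn γ (Icc (0:ℝ) 1))
    (hle : ∀ t ∈ Icc (0:ℝ) 1, γ t * h + m * ∫ s in a..b, k t s * g s ≤ u t)
    (hh : ∫ t, u t ∂μ ≤ h) :
    m * ∫ s in a..b, (∫ t, k t s ∂μ) * g s ≤ (1 - ∫ t, γ t ∂μ) * h := by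
  obtain ⟨hB_int, hB_swap⟩ :=
    integral_intervalIntegral_mul_swap hμ ha hab hb hk hk0 hkΦ hg hg0 hgΦ
  rw [← hB_swap, ← integral_const_mul]
  exact integral_le_one_sub_integral_mul isCompact_Icc hμ hu hγ (hB_int.const_mul m) hle hh

theorem mul_add_le_of_le_of_mul_le {γt h S B ut m α : ℝ} (hα : α < 1) (hγt : 0 ≤ γt)
    (hS : m * S ≤ (1 - α) * h) (hle : γt * h + m * B ≤ ut) :
    m * (γt / (1 - α) * S + B) ≤ ut := by
  have hmS : m * S / (1 - α) ≤ h := by rwa [div_le_iff₀ (by linarith), mul_comm h]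
  calc m * (γt / (1 - α) * S + B) = γt * (m * S / (1 - α)) + m * B := by ring
  _ ≤ γt * h + m * B := by gcongr
  _ ≤ ut := hle

theorem stmt4_general
    (k : ℝ → ℝ → ℝ) (g : ℝ → ℝ) (f : ℝ → ℝ → ℝ) (Φ γ : ℝ → ℝ) (a b c₁ c₂ c : ℝ)
    (H : (ℝ → ℝ) → ℝ) (K : Set (ℝ → ℝ))
    (hk_meas : Measurable (Function.uncurry k))
    (hk_nonneg : ∀ t ∈ Icc (0:ℝ) 1, ∀ s ∈ Icc (0:ℝ) 1, 0 ≤ k t s)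
    (ha : 0 ≤ a) (hab : a ≤ b) (hb : b ≤ 1)
    (hc₁ : c₁ ∈ Ioc (0:ℝ) 1)
    (hkΦ_up : ∀ t ∈ Icc (0:ℝ) 1, ∀ᵐ s ∂(volume.restrict (Icc (0:ℝ) 1)), k t s ≤ Φ s)
    (hg_meas : Measurable g)
    (hg_nonneg : ∀ᵐ s ∂(volume.restrict (Icc (0:ℝ) 1)), 0 ≤ g s)
    (hgΦ_int : IntegrableOn (fun s => g s * Φ s) (Icc (0:ℝ) 1))
    (hf_meas : ∀ u : ℝ, Measurable (fun t => f t u))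
    (hf_cont : ∀ᵐ t ∂(volume.restrict (Icc (0:ℝ) 1)), ContinuousOn (f t) (Ici 0))
    (hf_nonneg : ∀ t u : ℝ, 0 ≤ u → 0 ≤ f t u)
    (hf_bdd : ∀ r > 0, ∃ C, ∀ᵐ t ∂(volume.restrict (Icc (0:ℝ) 1)), ∀ u ∈ Icc (0:ℝ) r, f t u ≤ C)
    (hγ_cont : ContinuousOn γ (Icc (0:ℝ) 1))
    (hγ_nonneg : ∀ t ∈ Icc (0:ℝ) 1, 0 ≤ γ t)
    (hc₂ : c₂ ∈ Ioc (0:ℝ) 1)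
    (hc : c = min c₁ c₂)
    (hK : K = {u : ℝ → ℝ | ContinuousOn u (Icc (0:ℝ) 1) ∧
      (∀ t ∈ Icc (0:ℝ) 1, 0 ≤ u t) ∧ c * nrm u ≤ minOnAB u a b})
    (ρ : ℝ) (hρ : 0 < ρ) (hI0 : CondI0B k g f γ H K a b c ρ) :
    ∀ u ∈ K, minOnAB u a b = ρ → ∀ lam : ℝ, 0 ≤ lam →
      ¬ (∀ t ∈ Icc (0:ℝ) 1, u t = Tham k g f γ H u t + lam) := by
  intro u huK hmin lam hlam heq
  obtain ⟨μA, hfin, hnull, hαγ, hHge, fb, hfb, hsinf⟩ := hI0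
  have hμA : ∀ᵐ t ∂μA, t ∈ Icc (0:ℝ) 1 := by rwa [ae_iff]
  have hab01 : Icc a b ⊆ Icc (0:ℝ) 1 := Icc_subset_Icc ha hb
  have hc_pos : 0 < c := hc ▸ lt_min hc₁.1 hc₂.1
  subst hK
  obtain ⟨hu_cont, hu_nonneg, hu_min⟩ := id huK
  have hu_le : ∀ t ∈ Icc (0:ℝ) 1, u t ≤ ρ / c := fun t =>
    le_div_of_mul_nrm_le_minOnAB hu_cont hc_pos hu_min hmin
  obtain ⟨C, hC⟩ := hf_bdd (ρ / c) (div_pos hρ hc_pos)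
  have hfu : ∀ᵐ s ∂volume.restrict (Icc a b), fb * ρ ≤ f s (u s) := by
    filter_upwards [hfb, ae_restrict_mem measurableSet_Icc] with s hs hsab
    exact hs _ (hmin ▸ minOnAB_le (hu_cont.mono hab01) hsab) (hu_le s (hab01 hsab))
  have hlow : ∀ t ∈ Icc (0:ℝ) 1, γ t * H u + fb * ρ * ∫ s in a..b, k t s * g s ≤ u t := by
    intro t ht
    have := mul_intervalIntegral_le_intervalIntegral_mul_comp (κ := k t) ha hab hb
      (hk_meas.comp measurable_prodMk_left) (hk_nonneg t ht) (hkΦ_up t ht) hg_meas hg_nonneg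
      hgΦ_int hf_meas hf_cont hf_nonneg hC hu_cont hu_nonneg hu_le hfu
    rw [heq t ht, Tham]
    linarith
  have hHu := mul_intervalIntegral_le_one_sub_integral_mul hμA ha hab hb hk_meas hk_nonneg
    hkΦ_up hg_meas hg_nonneg hgΦ_int hu_cont hγ_cont hlow (hHge u huK hmin)
  refine (lt_minOnAB_of_one_lt_mul_sInf hab hρ (fun t ht => ?_) hsinf fun t ht =>
    mul_add_le_of_le_of_mul_le hαγ (hγ_nonneg t (hab01 ht)) hHu (hlow t (hab01 ht))).ne' hmin
  have h𝒦 : ∀ s ∈ Icc (0:ℝ) 1, 0 ≤ ∫ t, k t s ∂μA := fun s hs =>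
    integral_nonneg_of_ae (hμA.mono fun t ht => hk_nonneg t ht s hs)
  exact add_nonneg (mul_nonneg (div_nonneg (hγ_nonneg t (hab01 ht)) (by linarith))
    (intervalIntegral_mul_nonneg ha hab hb h𝒦 hg_nonneg))
    (intervalIntegral_mul_nonneg ha hab hb (hk_nonneg t (hab01 ht)) hg_nonneg)

theorem stmt4
    (k : ℝ → ℝ → ℝ) (g : ℝ → ℝ) (f : ℝ → ℝ → ℝ) (Φ γ : ℝ → ℝ) (a b c₁ c₂ c : ℝ)
    (H : (ℝ → ℝ) → ℝ) (K : Set (ℝ → ℝ))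
    (hk_meas : Measurable (Function.uncurry k))
    (hk_nonneg : ∀ t ∈ Icc (0:ℝ) 1, ∀ s ∈ Icc (0:ℝ) 1, 0 ≤ k t s)
    (hk_cont : ∀ τ ∈ Icc (0:ℝ) 1, ∀ᵐ s ∂(volume.restrict (Icc (0:ℝ) 1)),
      Filter.Tendsto (fun t => |k t s - k τ s|) (nhdsWithin τ (Icc (0:ℝ) 1)) (nhds 0))
    (ha : 0 ≤ a) (hab : a ≤ b) (hb : b ≤ 1)
    (hΦ_meas : Measurable Φ)
    (hΦ_bdd : ∃ C, ∀ᵐ s ∂(volume.restrict (Icc (0:ℝ) 1)), |Φ s| ≤ C)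
    (hc₁ : c₁ ∈ Ioc (0:ℝ) 1)
    (hkΦ_up : ∀ t ∈ Icc (0:ℝ) 1, ∀ᵐ s ∂(volume.restrict (Icc (0:ℝ) 1)), k t s ≤ Φ s)
    (hkΦ_low : ∀ t ∈ Icc a b, ∀ᵐ s ∂(volume.restrict (Icc (0:ℝ) 1)), c₁ * Φ s ≤ k t s)
    (hg_meas : Measurable g)
    (hg_nonneg : ∀ᵐ s ∂(volume.restrict (Icc (0:ℝ) 1)), 0 ≤ g s)
    (hgΦ_int : IntegrableOn (fun s => g s * Φ s) (Icc (0:ℝ) 1))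
    (hΦg_pos : 0 < ∫ s in a..b, Φ s * g s)
    (hf_meas : ∀ u : ℝ, Measurable (fun t => f t u))
    (hf_cont : ∀ᵐ t ∂(volume.restrict (Icc (0:ℝ) 1)), ContinuousOn (f t) (Ici 0))
    (hf_nonneg : ∀ t u : ℝ, 0 ≤ u → 0 ≤ f t u)
    (hf_bdd : ∀ r > 0, ∃ C, ∀ᵐ t ∂(volume.restrict (Icc (0:ℝ) 1)), ∀ u ∈ Icc (0:ℝ) r, f t u ≤ C)
    (hγ_cont : ContinuousOn γ (Icc (0:ℝ) 1))
    (hγ_nonneg : ∀ t ∈ Icc (0:ℝ) 1, 0 ≤ γ t)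
    (hc₂ : c₂ ∈ Ioc (0:ℝ) 1)
    (hγ_low : ∀ t ∈ Icc a b, c₂ * nrm γ ≤ γ t)
    (hc : c = min c₁ c₂)
    (hK : K = {u : ℝ → ℝ | ContinuousOn u (Icc (0:ℝ) 1) ∧
      (∀ t ∈ Icc (0:ℝ) 1, 0 ≤ u t) ∧ c * nrm u ≤ minOnAB u a b})
    (hH_nonneg : ∀ u ∈ K, 0 ≤ H u)
    (hH_cont : ∀ u ∈ K, ∀ ε > 0, ∃ δ > 0, ∀ v ∈ K,
      nrm (fun t => u t - v t) < δ → |H u - H v| < ε)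
    (hH_bdd : ∀ M : ℝ, ∃ M', ∀ u ∈ K, nrm u ≤ M → H u ≤ M')
    (ρ : ℝ) (hρ : 0 < ρ) (hI0 : CondI0B k g f γ H K a b c ρ) :
    ∀ u ∈ K, minOnAB u a b = ρ → ∀ lam : ℝ, 0 ≤ lam →
      ¬ (∀ t ∈ Icc (0:ℝ) 1, u t = Tham k g f γ H u t + lam) :=
  stmt4_general k g f Φ γ a b c₁ c₂ c H K hk_meas hk_nonneg ha hab hb hc₁ hkΦ_up hg_meas hg_nonneg
    hgΦ_int hf_meas hf_cont hf_nonneg hf_bdd hγ_cont hγ_nonneg hc₂ hc hK ρ hρ hI0
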